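/- arXiv:1602.01164 — 4 statements merged into one kernel-verified Lean document; each statement's English description precedes it below -/
import Mathlib

section
/- Let l_1,...,l_N : Θ → ℝ be differentiable with θ ∈ Θ, Δ = max_i l_i(θ), S = {i : l_i(θ) = Δ}. Then the normalized hypervolume gradient −∑_i α_i(μ)∇l_i(θ) converges to −(1/|S|)∑_{i∈S} ∇l_i(θ) as μ → Δ⁺, where α_i(μ) = (1/(μ − l_i(θ)))/∑_j (1/(μ − l_j(θ))). -/
/-! Multiplying numerator and denominator of each weight by `μ - Δ` turns it into
`((μ - Δ) / (μ - lᵢ)) / ∑ⱼ (μ - Δ) / (μ - lⱼ)`. Each ratio `(μ - Δ) / (μ - lᵢ)` is identically `1`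
when `lᵢ = Δ` and tends to `0` otherwise, so the weights tend to `1 / |S|` on `S` and to `0` off it. -/

open Filter Topology Finset

theorem tendsto_sub_div_sub_nhdsGT (a Δ : ℝ) :
    Tendsto (fun μ => (μ - Δ) / (μ - a)) (𝓝[>] Δ) (𝓝 (if a = Δ then 1 else 0)) := by
  by_cases haΔ : a = Δ
  · rw [if_pos haΔ]
    refine tendsto_const_nhds.congr' ?_
    filter_upwards [self_mem_nhdsWithin] with μ (hμ : Δ < μ)
    rw [haΔ, div_self (sub_ne_zero.mpr hμ.ne')]
  · rw [if_neg haΔ]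
    have hgap : Δ - a ≠ 0 := sub_ne_zero.mpr (Ne.symm haΔ)
    have h : Tendsto (fun μ => (μ - Δ) / (μ - a)) (𝓝 Δ) (𝓝 ((Δ - Δ) / (Δ - a))) :=
      (tendsto_id.sub_const Δ).div (tendsto_id.sub_const a) hgap
    rw [sub_self, zero_div] at h
    exact h.mono_left nhdsWithin_le_nhds

theorem tendsto_inv_sub_div_sum_inv_sub {ι : Type*} [Fintype ι] {a : ι → ℝ} {Δ : ℝ}
    (hΔ : Δ ∈ Set.range a) (i : ι) :
    Tendsto (fun μ => (μ - a i)⁻¹ / ∑ j, (μ - a j)⁻¹) (𝓝[>] Δ)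
      (𝓝 ((if a i = Δ then 1 else 0) / #{j | a j = Δ})) := by
  obtain ⟨j₀, hj₀⟩ := hΔ
  have hratio (j : ι) := tendsto_sub_div_sub_nhdsGT (a j) Δ
  have hsum : Tendsto (fun μ => ∑ j, (μ - Δ) / (μ - a j)) (𝓝[>] Δ) (𝓝 (#{j | a j = Δ} : ℝ)) := by
    simpa [Finset.sum_boole] using tendsto_finsetSum univ fun j _ => hratio j
  have hcard : (#{j | a j = Δ} : ℝ) ≠ 0 := by
    exact_mod_cast (Finset.card_pos.mpr ⟨j₀, by simpa using hj₀⟩).ne'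
  refine ((hratio i).div hsum hcard).congr' ?_
  filter_upwards [self_mem_nhdsWithin] with μ (hμ : Δ < μ)
  simp only [Pi.div_apply, div_eq_mul_inv (μ - Δ), ← Finset.mul_sum]
  exact mul_div_mul_left _ _ (sub_ne_zero.mpr hμ.ne')

theorem tendsto_sum_inv_sub_weight_smul {ι E : Type*} [Fintype ι] [AddCommGroup E] [Module ℝ E]
    [TopologicalSpace E] [ContinuousAdd E] [ContinuousSMul ℝ E] {a : ι → ℝ} {Δ : ℝ}
    (hΔ : Δ ∈ Set.range a) (g : ι → E) :
    Tendsto (fun μ => ∑ i, ((μ - a i)⁻¹ / ∑ j, (μ - a j)⁻¹) • g i) (𝓝[>] Δ)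
      (𝓝 ((1 / (#{j | a j = Δ} : ℝ)) • ∑ i ∈ {j | a j = Δ}, g i)) := by
  have h := tendsto_finsetSum univ fun i _ => (tendsto_inv_sub_div_sum_inv_sub hΔ i).smul_const (g i)
  convert h using 2
  simp only [Finset.smul_sum, ite_div, zero_div, ite_smul, zero_smul, Finset.sum_ite, Finset.sum_const_zero,
    add_zero, one_div]

theorem normalized_hypervolume_gradient_tendsto_max_loss_gradient_general
    (n N : ℕ)
    (l : Fin N → EuclideanSpace ℝ (Fin n) → ℝ)
    (θ : EuclideanSpace ℝ (Fin n))
    (Δ : ℝ) (hΔ : IsGreatest (Set.range fun i => l i θ) Δ)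
    (S : Finset (Fin N)) (hS : S = Finset.univ.filter fun i => l i θ = Δ) :
    Tendsto
      (fun μ : ℝ =>
        -∑ i : Fin N,
          ((μ - l i θ)⁻¹ / ∑ j : Fin N, (μ - l j θ)⁻¹) • gradient (l i) θ)
      (nhdsWithin Δ (Set.Ioi Δ))
      (nhds (-((1 / (S.card : ℝ)) • ∑ i ∈ S, gradient (l i) θ))) := by
  subst hS
  exact (tendsto_sum_inv_sub_weight_smul hΔ.1 fun i => gradient (l i) θ).neg

theorem normalized_hypervolume_gradient_tendsto_max_loss_gradient
    (n N : ℕ) (hN : 0 < N)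
    (Θ : Set (EuclideanSpace ℝ (Fin n))) (hΘ : IsOpen Θ)
    (l : Fin N → EuclideanSpace ℝ (Fin n) → ℝ)
    (hl : ∀ i, DifferentiableOn ℝ (l i) Θ)
    (θ : EuclideanSpace ℝ (Fin n)) (hθ : θ ∈ Θ)
    (Δ : ℝ) (hΔ : IsGreatest (Set.range fun i => l i θ) Δ)
    (S : Finset (Fin N)) (hS : S = Finset.univ.filter fun i => l i θ = Δ) :
    Tendsto
      (fun μ : ℝ =>
        -∑ i : Fin N,
          ((μ - l i θ)⁻¹ / ∑ j : Fin N, (μ - l j θ)⁻¹) • gradient (l i) θ)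
      (nhdsWithin Δ (Set.Ioi Δ))
      (nhds (-((1 / (S.card : ℝ)) • ∑ i ∈ S, gradient (l i) θ))) :=
  normalized_hypervolume_gradient_tendsto_max_loss_gradient_general n N l θ Δ hΔ S hS
end

section
/- (Lemma: weight concentration bound, mean-to-hypervolume direction.) Let l_1,...,l_N be loss functions on open Θ ⊆ ℝⁿ, θ ∈ Θ, ε > 0 with θ+δ ∈ Θ for ‖δ‖ ≤ ε, ν > 0, and C_1 ≤ l_i(θ+δ) ≤ C_2 for all i and ‖δ‖ ≤ ε. Define β_i(δ) = 1/(μ − l_i(θ+δ)) and α_i(δ) = β_i(δ)/∑_j β_j(δ). If μ > max{C_2, ((1+ν)C_2 − C_1)/ν, (C_2 − (1−ν)C_1)/ν}, then |N α_i(δ) − 1| ≤ ν for all i ∈ [N] and ‖δ‖ ≤ ε. -/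
open Finset

/-
The weights `α_i` are the normalized inverse gaps `(μ - l_i)⁻¹`. Each gap lies in
`[μ - C₂, μ - C₁]`, so each inverse gap lies within a factor `(μ - C₁) / (μ - C₂)` of
every other one, hence of their mean; `N α_i` is the ratio of one inverse gap to that mean.
The three lower bounds on `μ` make the gaps positive, this factor at most `1 + ν` and its
reciprocal at least `1 - ν`.
-/

section NormalizedWeights

variable {ι : Type*} {s : Finset ι} {b : ι → ℝ} {m M : ℝ} {i : ι}

theorem card_mul_div_sum_le (hm : 0 < m) (hb : ∀ j ∈ s, b j ∈ Set.Icc m M) (hi : i ∈ s) :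
    (#s : ℝ) * (b i / ∑ j ∈ s, b j) ≤ M / m := by
  have hs : (0 : ℝ) < #s := by exact_mod_cast card_pos.mpr ⟨i, hi⟩
  have hsum : (#s : ℝ) * m ≤ ∑ j ∈ s, b j := by
    simpa only [sum_const, nsmul_eq_mul] using sum_le_sum fun j hj => (hb j hj).1
  calc (#s : ℝ) * (b i / ∑ j ∈ s, b j)
      = #s * b i / ∑ j ∈ s, b j := (mul_div_assoc ..).symm
    _ ≤ #s * M / (#s * m) :=
        div_le_div₀ (mul_nonneg hs.le (hm.le.trans ((hb i hi).1.trans (hb i hi).2)))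
          (mul_le_mul_of_nonneg_left (hb i hi).2 hs.le) (by positivity) hsum
    _ = M / m := mul_div_mul_left _ _ hs.ne'

theorem div_le_card_mul_div_sum (hm : 0 < m) (hb : ∀ j ∈ s, b j ∈ Set.Icc m M)
    (hi : i ∈ s) :
    m / M ≤ (#s : ℝ) * (b i / ∑ j ∈ s, b j) := by
  have hs : (0 : ℝ) < #s := by exact_mod_cast card_pos.mpr ⟨i, hi⟩
  have hsum : ∑ j ∈ s, b j ≤ #s * M := by
    simpa only [sum_const, nsmul_eq_mul] using sum_le_sum fun j hj => (hb j hj).2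
  calc m / M = #s * m / (#s * M) := (mul_div_mul_left _ _ hs.ne').symm
    _ ≤ #s * b i / ∑ j ∈ s, b j :=
        div_le_div₀ (mul_nonneg hs.le (hm.le.trans (hb i hi).1))
          (mul_le_mul_of_nonneg_left (hb i hi).1 hs.le)
          (sum_pos (fun j hj => hm.trans_le (hb j hj).1) ⟨i, hi⟩) hsum
    _ = #s * (b i / ∑ j ∈ s, b j) := mul_div_assoc ..

theorem card_mul_inv_div_sum_inv_mem_Icc {a : ι → ℝ} {L U : ℝ} (hL : 0 < L)
    (ha : ∀ j ∈ s, a j ∈ Set.Icc L U) (hmem : i ∈ s) :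
    (#s : ℝ) * ((a i)⁻¹ / ∑ j ∈ s, (a j)⁻¹) ∈ Set.Icc (L / U) (U / L) := by
  have hinv : ∀ j ∈ s, (a j)⁻¹ ∈ Set.Icc U⁻¹ L⁻¹ := fun j hj =>
    ⟨inv_anti₀ (hL.trans_le (ha j hj).1) (ha j hj).2, inv_anti₀ hL (ha j hj).1⟩
  have hU : 0 < U⁻¹ := inv_pos.mpr (hL.trans_le ((ha i hmem).1.trans (ha i hmem).2))
  constructor
  · simpa only [inv_div_inv] using div_le_card_mul_div_sum hU hinv hmem
  · simpa only [inv_div_inv] using card_mul_div_sum_le hU hinv hmem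

end NormalizedWeights

theorem weight_concentration_mean_to_hypervolume_general
    (n N : ℕ)
    (l : Fin N → EuclideanSpace ℝ (Fin n) → ℝ)
    (θ : EuclideanSpace ℝ (Fin n))
    (ε : ℝ)
    (ν : ℝ) (hν : 0 < ν)
    (C₁ C₂ : ℝ)
    (hbound : ∀ i, ∀ δ : EuclideanSpace ℝ (Fin n), ‖δ‖ ≤ ε →
      C₁ ≤ l i (θ + δ) ∧ l i (θ + δ) ≤ C₂)
    (μ : ℝ)
    (hμ : μ > max (max C₂ (((1 + ν) * C₂ - C₁) / ν)) ((C₂ - (1 - ν) * C₁) / ν)) :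
    ∀ i, ∀ δ : EuclideanSpace ℝ (Fin n), ‖δ‖ ≤ ε →
      |(N : ℝ) * ((μ - l i (θ + δ))⁻¹ / ∑ j : Fin N, (μ - l j (θ + δ))⁻¹) - 1|
        ≤ ν := by
  intro i δ hδ
  obtain ⟨⟨hC₂, hupper⟩, hlower⟩ := by simpa only [gt_iff_lt, max_lt_iff] using hμ
  rw [div_lt_iff₀ hν] at hupper hlower
  have hgap : 0 < μ - C₂ := by linarith
  have hgaps : ∀ j ∈ (univ : Finset (Fin N)),
      μ - l j (θ + δ) ∈ Set.Icc (μ - C₂) (μ - C₁) :=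
    fun j _ => ⟨by linarith [(hbound j δ hδ).2], by linarith [(hbound j δ hδ).1]⟩
  obtain ⟨hge, hle⟩ := card_mul_inv_div_sum_inv_mem_Icc hgap hgaps (mem_univ i)
  rw [card_univ, Fintype.card_fin] at hge hle
  have hratio_le : (μ - C₁) / (μ - C₂) ≤ 1 + ν := by rw [div_le_iff₀ hgap]; linarith
  have hratio_ge : 1 - ν ≤ (μ - C₂) / (μ - C₁) := by
    rw [le_div_iff₀ (by linarith [hbound i δ hδ])]; linarith
  rw [abs_sub_le_iff]
  constructor <;> linarith

theorem weight_concentration_mean_to_hypervolume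
    (n N : ℕ)
    (Θ : Set (EuclideanSpace ℝ (Fin n))) (hΘ : IsOpen Θ)
    (l : Fin N → EuclideanSpace ℝ (Fin n) → ℝ)
    (θ : EuclideanSpace ℝ (Fin n)) (hθ : θ ∈ Θ)
    (ε : ℝ) (hε : 0 < ε)
    (hball : ∀ δ : EuclideanSpace ℝ (Fin n), ‖δ‖ ≤ ε → θ + δ ∈ Θ)
    (ν : ℝ) (hν : 0 < ν)
    (C₁ C₂ : ℝ)
    (hbound : ∀ i, ∀ δ : EuclideanSpace ℝ (Fin n), ‖δ‖ ≤ ε →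
      C₁ ≤ l i (θ + δ) ∧ l i (θ + δ) ≤ C₂)
    (μ : ℝ)
    (hμ : μ > max (max C₂ (((1 + ν) * C₂ - C₁) / ν)) ((C₂ - (1 - ν) * C₁) / ν)) :
    ∀ i, ∀ δ : EuclideanSpace ℝ (Fin n), ‖δ‖ ≤ ε →
      |(N : ℝ) * ((μ - l i (θ + δ))⁻¹ / ∑ j : Fin N, (μ - l j (θ + δ))⁻¹) - 1|
        ≤ ν :=
  weight_concentration_mean_to_hypervolume_general n N l θ ε ν hν C₁ C₂ hbound μ hμ
end

section
/- (Theorem 1: near-optimality of mean-loss minimizers for the hypervolume.) Let l_1,...,l_N be continuously differentiable loss functions on open Θ ⊆ ℝⁿ, θ* a local minimum of J_m(θ) = (1/N)∑_i l_i(θ), and ε > 0 with θ*+δ ∈ Θ for ‖δ‖ ≤ ε. Let C_1 ≤ l_i(θ*+δ) ≤ C_2 and ‖∇l_i(θ*+δ)‖ ≤ C_3 for all i and ‖δ‖ ≤ ε, and let ν > 0. Then there exists ε' ∈ (0, ε] such that H(μ, θ*+δ) ≤ H(μ, θ*) + νC_3ε'N/(μ − C_2) for all ‖δ‖ ≤ ε'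 and all μ > max{C_2, ((1+ν)C_2 − C_1)/ν, (C_2 − (1−ν)C_1)/ν}. -/
/-! Since `t ↦ log (μ - t)` is concave with slope `-1 / (μ - t)`, moving each loss from
`b = l i θs` to `a = l i (θs + δ)` raises `log (μ - ·)` by at most `(b - a) / (μ - b)`. Replacing the
denominator by `μ - C₂` produces the sum `∑ (b - a) / (μ - C₂)`, which is `≤ 0` because `θs` minimises
the mean loss; the price is `(b - a) (b - C₂) / ((μ - b) (μ - C₂))` per term. The gradient bound
gives `|a - b| ≤ C₃ ε'`, and `μ > ((1 + ν) C₂ - C₁) / ν`, i.e. `C₂ - C₁ < ν (μ - C₂)`, makes the price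
at most `ν C₃ ε' / (μ - C₂)`. -/

open Real Metric

theorem Real.log_le_log_add_sub_div {x y : ℝ} (hx : 0 < x) (hy : 0 < y) :
    log x ≤ log y + (x - y) / y := by
  have h := log_le_sub_one_of_pos (div_pos hx hy)
  rw [log_div hx.ne' hy.ne', div_sub_one hy.ne'] at h
  linarith

theorem log_sub_le_log_sub_add_div {μ a b C₁ C₂ K ν : ℝ} (hμ : C₂ < μ) (ha : a ≤ C₂)
    (hb₁ : C₁ ≤ b) (hb₂ : b ≤ C₂) (hab : |a - b| ≤ K) (hν : C₂ - C₁ ≤ ν * (μ - C₂)) :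
    log (μ - a) ≤ log (μ - b) + (b - a) / (μ - C₂) + ν * K / (μ - C₂) := by
  have hμb : 0 < μ - b := by linarith
  have hμC₂ : 0 < μ - C₂ := by linarith
  have hν₀ : 0 ≤ ν := nonneg_of_mul_nonneg_left (by linarith) hμC₂
  have hK : 0 ≤ K := (abs_nonneg _).trans hab
  have hdiff : (b - a) * (b - C₂) ≤ K * (C₂ - C₁) :=
    calc (b - a) * (b - C₂) ≤ |a - b| * (C₂ - b) := by
          rw [abs_sub_comm]; nlinarith [neg_abs_le (b - a)]
      _ ≤ K * (C₂ - C₁) := mul_le_mul hab (by linarith) (by linarith) hK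
  have hshift : (b - a) / (μ - b) ≤ (b - a) / (μ - C₂) + ν * K / (μ - C₂) := by
    rw [← add_div, div_le_div_iff₀ hμb hμC₂]
    nlinarith [mul_le_mul_of_nonneg_left hν hK, mul_nonneg (mul_nonneg hν₀ hK) (sub_nonneg.2 hb₂)]
  have hconcave := log_le_log_add_sub_div (by linarith : 0 < μ - a) hμb
  rw [sub_sub_sub_cancel_left] at hconcave
  linarith

theorem sum_log_sub_le_of_sum_le {ι : Type*} (s : Finset ι) {a b : ι → ℝ} {μ C₁ C₂ K ν : ℝ}
    (hμ : C₂ < μ) (ha : ∀ i ∈ s, a i ≤ C₂) (hb : ∀ i ∈ s, C₁ ≤ b i ∧ b i ≤ C₂)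
    (hab : ∀ i ∈ s, |a i - b i| ≤ K) (hν : C₂ - C₁ ≤ ν * (μ - C₂))
    (hsum : ∑ i ∈ s, b i ≤ ∑ i ∈ s, a i) :
    ∑ i ∈ s, log (μ - a i) ≤ ∑ i ∈ s, log (μ - b i) + ν * K * s.card / (μ - C₂) := by
  have hμC₂ : 0 < μ - C₂ := by linarith
  calc ∑ i ∈ s, log (μ - a i)
      ≤ ∑ i ∈ s, (log (μ - b i) + (b i - a i) / (μ - C₂) + ν * K / (μ - C₂)) :=
        Finset.sum_le_sum fun i hi =>
          log_sub_le_log_sub_add_div hμ (ha i hi) (hb i hi).1 (hb i hi).2 (hab i hi) hν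
    _ = ∑ i ∈ s, log (μ - b i) + (∑ i ∈ s, b i - ∑ i ∈ s, a i) / (μ - C₂)
          + ν * K * s.card / (μ - C₂) := by
        rw [Finset.sum_add_distrib, Finset.sum_add_distrib, ← Finset.sum_div,
          Finset.sum_sub_distrib, Finset.sum_const, nsmul_eq_mul]
        ring
    _ ≤ ∑ i ∈ s, log (μ - b i) + ν * K * s.card / (μ - C₂) := by
        have : (∑ i ∈ s, b i - ∑ i ∈ s, a i) / (μ - C₂) ≤ 0 :=
          div_nonpos_of_nonpos_of_nonneg (by linarith) hμC₂.le
        linarith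

theorem Convex.norm_image_sub_le_of_norm_gradient_le {E : Type*} [NormedAddCommGroup E]
    [InnerProductSpace ℝ E] [CompleteSpace E] {f : E → ℝ} {s : Set E} {C : ℝ} {x y : E}
    (hs : Convex ℝ s) (hf : ∀ z ∈ s, DifferentiableAt ℝ f z) (bound : ∀ z ∈ s, ‖gradient f z‖ ≤ C)
    (hx : x ∈ s) (hy : y ∈ s) : ‖f y - f x‖ ≤ C * ‖y - x‖ :=
  hs.norm_image_sub_le_of_norm_fderiv_le hf
    (fun z hz => by simpa [gradient, LinearIsometryEquiv.norm_map] using bound z hz) hx hy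

theorem isLocalMin_sum_of_isLocalMin_mean {X ι : Type*} [TopologicalSpace X] [Fintype ι]
    {f : ι → X → ℝ} {a : X} (h : IsLocalMin (fun x => (1 / (Fintype.card ι : ℝ)) * ∑ i, f i x) a) :
    IsLocalMin (fun x => ∑ i, f i x) a := by
  rcases isEmpty_or_nonempty ι with hι | hι
  · simp [IsLocalMin, IsMinFilter]
  · exact h.mono fun x hx => le_of_mul_le_mul_left hx (by positivity)

theorem mean_loss_minimizer_near_optimal_for_hypervolume_general
    (n N : ℕ)
    (Θ : Set (EuclideanSpace ℝ (Fin n))) (hΘ : IsOpen Θ)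
    (l : Fin N → EuclideanSpace ℝ (Fin n) → ℝ)
    (hl : ∀ i, ContDiffOn ℝ 1 (l i) Θ)
    (θs : EuclideanSpace ℝ (Fin n))
    (hmin : IsLocalMin (fun θ => (1 / (N : ℝ)) * ∑ i : Fin N, l i θ) θs)
    (ε : ℝ) (hε : 0 < ε)
    (hball : ∀ δ : EuclideanSpace ℝ (Fin n), ‖δ‖ ≤ ε → θs + δ ∈ Θ)
    (C₁ C₂ C₃ : ℝ)
    (hbound : ∀ i, ∀ δ : EuclideanSpace ℝ (Fin n), ‖δ‖ ≤ ε →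
      C₁ ≤ l i (θs + δ) ∧ l i (θs + δ) ≤ C₂)
    (hgrad : ∀ i, ∀ δ : EuclideanSpace ℝ (Fin n), ‖δ‖ ≤ ε →
      ‖gradient (l i) (θs + δ)‖ ≤ C₃)
    (ν : ℝ) (hν : 0 < ν) :
    ∃ ε' ∈ Set.Ioc (0 : ℝ) ε,
      ∀ δ : EuclideanSpace ℝ (Fin n), ‖δ‖ ≤ ε' →
      ∀ μ : ℝ,
        μ > max (max C₂ (((1 + ν) * C₂ - C₁) / ν)) ((C₂ - (1 - ν) * C₁) / ν) →
        ∑ i : Fin N, Real.log (μ - l i (θs + δ))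
          ≤ (∑ i : Fin N, Real.log (μ - l i θs))
            + ν * C₃ * ε' * N / (μ - C₂) := by
  obtain ⟨r, hr, hsum_min⟩ := eventually_nhds_iff_ball.mp
    (isLocalMin_sum_of_isLocalMin_mean (f := l) (by simpa using hmin))
  refine ⟨min ε (r / 2), ⟨lt_min hε (half_pos hr), min_le_left _ _⟩, fun δ hδ μ hμ => ?_⟩
  simp only [gt_iff_lt, max_lt_iff, div_lt_iff₀ hν] at hμ
  have hgap : C₂ - C₁ ≤ ν * (μ - C₂) := by linarith [hμ.1.2]
  have hδε : ‖δ‖ ≤ ε := hδ.trans (min_le_left _ _)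
  have hδr : θs + δ ∈ ball θs r := by
    simpa using hδ.trans_lt ((min_le_right _ _).trans_lt (half_lt_self hr))
  have hl₀ i : C₁ ≤ l i θs ∧ l i θs ≤ C₂ := by simpa using hbound i 0 (by simpa using hε.le)
  have hlip i : |l i (θs + δ) - l i θs| ≤ C₃ * min ε (r / 2) := by
    have hdiff : ∀ x ∈ closedBall θs ε, DifferentiableAt ℝ (l i) x := fun x hx =>
      ((hl i).differentiableOn one_ne_zero).differentiableAt
        (hΘ.mem_nhds (by simpa using hball (x - θs) (mem_closedBall_iff_norm.mp hx)))
    have hC₃ : 0 ≤ C₃ := (norm_nonneg _).trans (hgrad i 0 (by simpa using hε.le))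
    calc |l i (θs + δ) - l i θs| ≤ C₃ * ‖θs + δ - θs‖ :=
          (convex_closedBall θs ε).norm_image_sub_le_of_norm_gradient_le hdiff
            (fun x hx => by simpa using hgrad i (x - θs) (mem_closedBall_iff_norm.mp hx))
            (mem_closedBall_self hε.le) (by simpa using hδε)
      _ ≤ C₃ * min ε (r / 2) := by simpa using mul_le_mul_of_nonneg_left hδ hC₃
  have key := sum_log_sub_le_of_sum_le Finset.univ hμ.1.1 (fun i _ => (hbound i δ hδε).2)
    (fun i _ => hl₀ i) (fun i _ => hlip i) hgap (hsum_min _ hδr)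
  simpa [mul_assoc] using key

theorem mean_loss_minimizer_near_optimal_for_hypervolume
    (n N : ℕ)
    (Θ : Set (EuclideanSpace ℝ (Fin n))) (hΘ : IsOpen Θ)
    (l : Fin N → EuclideanSpace ℝ (Fin n) → ℝ)
    (hl : ∀ i, ContDiffOn ℝ 1 (l i) Θ)
    (θs : EuclideanSpace ℝ (Fin n)) (hθs : θs ∈ Θ)
    (hmin : IsLocalMin (fun θ => (1 / (N : ℝ)) * ∑ i : Fin N, l i θ) θs)
    (ε : ℝ) (hε : 0 < ε)
    (hball : ∀ δ : EuclideanSpace ℝ (Fin n), ‖δ‖ ≤ ε → θs + δ ∈ Θ)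
    (C₁ C₂ C₃ : ℝ)
    (hbound : ∀ i, ∀ δ : EuclideanSpace ℝ (Fin n), ‖δ‖ ≤ ε →
      C₁ ≤ l i (θs + δ) ∧ l i (θs + δ) ≤ C₂)
    (hgrad : ∀ i, ∀ δ : EuclideanSpace ℝ (Fin n), ‖δ‖ ≤ ε →
      ‖gradient (l i) (θs + δ)‖ ≤ C₃)
    (ν : ℝ) (hν : 0 < ν) :
    ∃ ε' ∈ Set.Ioc (0 : ℝ) ε,
      ∀ δ : EuclideanSpace ℝ (Fin n), ‖δ‖ ≤ ε' →
      ∀ μ : ℝ,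
        μ > max (max C₂ (((1 + ν) * C₂ - C₁) / ν)) ((C₂ - (1 - ν) * C₁) / ν) →
        ∑ i : Fin N, Real.log (μ - l i (θs + δ))
          ≤ (∑ i : Fin N, Real.log (μ - l i θs))
            + ν * C₃ * ε' * N / (μ - C₂) :=
  mean_loss_minimizer_near_optimal_for_hypervolume_general n N Θ hΘ l hl θs hmin ε hε hball C₁ C₂ C₃
    hbound hgrad ν hν
end

section
/- (Lemma 7: approximate first-order optimality of mean loss at hypervolume maxima.) Let l_1,...,l_N be continuously differentiable on open Θ ⊆ ℝⁿ and θ* a local maximum of H(μ,θ) = ∑_i log(μ − l_i(θ)). Then there exists ε > 0 such that for all ξ ∈ (0, ε] and all Δ with ‖Δ‖ ≤ ξ: θ* + Δ ∈ Θ and ∑_{i=1}^N ∇l_i(θ*+Δ) · Δ ≥ −ν C_3 ξ N, where C_1 ≤ l_i(θ*+Δ) ≤ C_2, ‖∇l_i(θ*+Δ)‖ ≤ C_3 on the relevant ball and ν = max{(μ−C_1)/(μ−C_2) − 1, 1 − (μ−C_2)/(μ−C_1)}. -/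
/-! At a local maximum `θ*` of `∑ᵢ log (μ - lᵢ)` the gradient vanishes:
`∑ᵢ ∇lᵢ(θ*) / (μ - lᵢ(θ*)) = 0`. Subtracting `μ - C₂` times this identity from
`∑ᵢ ⟪∇lᵢ(θ*), Δ⟫` leaves `∑ᵢ (1 - (μ - C₂) / (μ - lᵢ(θ*))) ⟪∇lᵢ(θ*), Δ⟫`, whose coefficients lie
in `[0, 1 - (μ - C₂) / (μ - C₁)]`; this bounds the sum at `θ*` by the smaller of the two
candidates for `ν`. The two candidates differ by `(C₂ - C₁)² / ((μ - C₁)(μ - C₂))`, and continuity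
of the gradients absorbs the move from `θ*` to `θ* + Δ` into that gap. When the gap or `C₃` is
zero, all gradients vanish near `θ*`. -/

open RealInnerProductSpace Filter Topology

theorem exists_forall_norm_le_of_eventually_nhds {E : Type*} [SeminormedAddGroup E]
    {P : E → Prop} {x : E} {ε₀ : ℝ} (hε₀ : 0 < ε₀) (h : ∀ᶠ y in 𝓝 x, P y) :
    ∃ ε ∈ Set.Ioc 0 ε₀, ∀ Δ : E, ‖Δ‖ ≤ ε → P (x + Δ) := by
  obtain ⟨ρ, hρ, hP⟩ := Metric.eventually_nhds_iff.1 h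
  refine ⟨min ε₀ (ρ / 2), ⟨by positivity, min_le_left _ _⟩, fun Δ hΔ => hP ?_⟩
  rw [dist_self_add_left]
  linarith [min_le_right ε₀ (ρ / 2)]

theorem div_sub_one_sub_one_sub_div {p q : ℝ} (hp : p ≠ 0) (hq : q ≠ 0) :
    (q / p - 1) - (1 - p / q) = (q - p) ^ 2 / (p * q) := by
  field_simp

theorem neg_mul_card_le_sum_of_sum_div_eq_zero {ι : Type*} [Fintype ι] {a b : ι → ℝ}
    {p q M : ℝ} (hp : 0 < p) (ha : ∀ i, p ≤ a i ∧ a i ≤ q) (hb : ∀ i, |b i| ≤ M)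
    (hsum : ∑ i, b i / a i = 0) :
    -((1 - p / q) * M * Fintype.card ι) ≤ ∑ i, b i := by
  have hterm : ∀ i, -((1 - p / q) * M) ≤ (1 - p / a i) * b i := by
    intro i
    obtain ⟨hpa, haq⟩ := ha i
    have ha₀ : 0 < a i := hp.trans_le hpa
    have hc₀ : 0 ≤ 1 - p / a i := sub_nonneg.2 ((div_le_one ha₀).2 hpa)
    have hcq : 1 - p / a i ≤ 1 - p / q := by gcongr
    have hM : 0 ≤ M := (abs_nonneg _).trans (hb i)
    calc -((1 - p / q) * M) ≤ (1 - p / a i) * -M := by rw [mul_neg]; gcongr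
      _ ≤ (1 - p / a i) * b i := mul_le_mul_of_nonneg_left (neg_le_of_abs_le (hb i)) hc₀
  -- subtract `p * ∑ i, b i / a i = 0`
  have hrewrite : ∑ i, b i = ∑ i, (1 - p / a i) * b i := by
    have hzero : ∑ i, p * (b i / a i) = 0 := by rw [← Finset.mul_sum, hsum, mul_zero]
    rw [← sub_zero (∑ i, b i), ← hzero, ← Finset.sum_sub_distrib]
    refine Finset.sum_congr rfl fun i _ => ?_
    ring
  rw [hrewrite, mul_comm _ (Fintype.card ι : ℝ), ← mul_neg, ← nsmul_eq_mul]
  exact Finset.card_nsmul_le_sum _ _ _ fun i _ => hterm i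

variable {E : Type*} [NormedAddCommGroup E] [InnerProductSpace ℝ E]

theorem ContinuousAt.eventually_inner_sub_le_inner {g : E → E} {x : E} (hg : ContinuousAt g x)
    {δ : ℝ} (hδ : 0 < δ) :
    ∀ᶠ y in 𝓝 x, ⟪g x, y - x⟫ - δ * ‖y - x‖ ≤ ⟪g y, y - x⟫ := by
  filter_upwards [hg.eventually (Metric.closedBall_mem_nhds (g x) hδ)] with y hy
  have hdist : ‖g y - g x‖ ≤ δ := by rwa [← dist_eq_norm]
  have hinner := neg_le_of_abs_le (abs_real_inner_le_norm (g y - g x) (y - x))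
  rw [inner_sub_left] at hinner
  linarith [mul_le_mul_of_nonneg_right hdist (norm_nonneg (y - x))]

theorem ContDiffOn.continuousAt_gradient [CompleteSpace E] {f : E → ℝ} {s : Set E} {x : E}
    (hf : ContDiffOn ℝ 1 f s) (hs : IsOpen s) (hx : x ∈ s) : ContinuousAt (gradient f) x :=
  (InnerProductSpace.toDual ℝ E).symm.continuous.continuousAt.comp
    ((hf.continuousOn_fderiv_of_isOpen hs le_rfl).continuousAt (hs.mem_nhds hx))

theorem eventually_gradient_eq_zero_of_eventually_eq [CompleteSpace E] {f : E → ℝ} {x : E} {c : ℝ}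
    (hf : ∀ᶠ y in 𝓝 x, f y = c) : ∀ᶠ y in 𝓝 x, gradient f y = 0 :=
  hf.eventually_nhds.mono fun y hy => by
    rw [(show f =ᶠ[𝓝 y] fun _ => c from hy).gradient_eq, gradient_fun_const]

theorem sum_inv_smul_gradient_eq_zero_of_isLocalMax_sum_log [CompleteSpace E] {ι : Type*}
    [Fintype ι] {f : ι → E → ℝ} {x : E} {μ : ℝ} (hf : ∀ i, DifferentiableAt ℝ (f i) x)
    (hlt : ∀ i, f i x < μ) (hmax : IsLocalMax (fun y => ∑ i, Real.log (μ - f i y)) x) :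
    ∑ i, (μ - f i x)⁻¹ • gradient (f i) x = 0 := by
  have hderiv := HasFDerivAt.fun_sum (u := Finset.univ) fun i _ =>
    ((hasFDerivAt_const μ x).sub (hf i).hasFDerivAt).log (sub_pos.2 (hlt i)).ne'
  have hzero := hmax.hasFDerivAt_eq_zero hderiv
  apply (InnerProductSpace.toDual ℝ E).injective
  rw [map_zero, map_sum]
  simp only [map_smul, toDual_gradient]
  simpa [Finset.sum_neg_distrib] using hzero

theorem neg_mul_card_le_sum_inner_gradient_of_isLocalMax_sum_log [CompleteSpace E] {ι : Type*}
    [Fintype ι] {f : ι → E → ℝ} {x : E} {μ C₁ C₂ C₃ : ℝ} (hf : ∀ i, DifferentiableAt ℝ (f i) x)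
    (hmax : IsLocalMax (fun y => ∑ i, Real.log (μ - f i y)) x) (hμ : C₂ < μ)
    (hbound : ∀ i, C₁ ≤ f i x ∧ f i x ≤ C₂) (hgrad : ∀ i, ‖gradient (f i) x‖ ≤ C₃) (v : E) :
    -((1 - (μ - C₂) / (μ - C₁)) * (C₃ * ‖v‖) * Fintype.card ι) ≤ ∑ i, ⟪gradient (f i) x, v⟫ := by
  have hcrit := sum_inv_smul_gradient_eq_zero_of_isLocalMax_sum_log hf
    (fun i => (hbound i).2.trans_lt hμ) hmax
  refine neg_mul_card_le_sum_of_sum_div_eq_zero (a := fun i => μ - f i x) (sub_pos.2 hμ)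
    (fun i => ⟨by linarith [hbound i], by linarith [hbound i]⟩)
    (fun i => (abs_real_inner_le_norm _ _).trans (by gcongr; exact hgrad i)) ?_
  simpa [sum_inner, real_inner_smul_left, div_eq_inv_mul] using congrArg (⟪·, v⟫) hcrit

theorem eventually_neg_mul_norm_le_sum_inner_gradient_of_lt [CompleteSpace E] {ι : Type*}
    [Fintype ι] {f : ι → E → ℝ} {x : E} {μ C₁ C₂ C₃ : ℝ} (hf : ∀ i, DifferentiableAt ℝ (f i) x)
    (hcont : ∀ i, ContinuousAt (gradient (f i)) x)
    (hmax : IsLocalMax (fun y => ∑ i, Real.log (μ - f i y)) x) (hμ : C₂ < μ) (hC₁₂ : C₁ < C₂)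
    (hC₃ : 0 < C₃) (hbound : ∀ i, C₁ ≤ f i x ∧ f i x ≤ C₂) (hgrad : ∀ i, ‖gradient (f i) x‖ ≤ C₃) :
    ∀ᶠ y in 𝓝 x, -(((μ - C₁) / (μ - C₂) - 1) * C₃ * Fintype.card ι * ‖y - x‖) ≤
      ∑ i, ⟪gradient (f i) y, y - x⟫ := by
  have hslack : 0 < ((μ - C₁) / (μ - C₂) - 1) - (1 - (μ - C₂) / (μ - C₁)) := by
    rw [div_sub_one_sub_one_sub_div (by linarith) (by linarith)]
    exact div_pos (pow_pos (by linarith) 2) (mul_pos (by linarith) (by linarith))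
  filter_upwards [eventually_all.2 fun i => (hcont i).eventually_inner_sub_le_inner
    (mul_pos hslack hC₃)] with y hy
  have hat_x := neg_mul_card_le_sum_inner_gradient_of_isLocalMax_sum_log hf hmax hμ hbound hgrad
    (y - x)
  have hperturb := Finset.sum_le_sum fun i (_ : i ∈ Finset.univ) => hy i
  rw [Finset.sum_sub_distrib, Finset.sum_const, Finset.card_univ, nsmul_eq_mul] at hperturb
  linarith

theorem eventually_neg_mul_norm_le_sum_inner_gradient [CompleteSpace E] {ι : Type*}
    [Fintype ι] [Nonempty ι] {f : ι → E → ℝ} {x : E} {μ C₁ C₂ C₃ : ℝ}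
    (hf : ∀ i, DifferentiableAt ℝ (f i) x) (hcont : ∀ i, ContinuousAt (gradient (f i)) x)
    (hmax : IsLocalMax (fun y => ∑ i, Real.log (μ - f i y)) x) (hμ : C₂ < μ)
    (hnear : ∀ᶠ y in 𝓝 x, ∀ i, (C₁ ≤ f i y ∧ f i y ≤ C₂) ∧ ‖gradient (f i) y‖ ≤ C₃) :
    ∀ᶠ y in 𝓝 x, -(((μ - C₁) / (μ - C₂) - 1) * C₃ * Fintype.card ι * ‖y - x‖) ≤
      ∑ i, ⟪gradient (f i) y, y - x⟫ := by
  obtain ⟨i₀⟩ := ‹Nonempty ι›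
  have hx := hnear.self_of_nhds
  obtain ⟨⟨hC₁, hC₂⟩, hC₃⟩ := hx i₀
  rcases (hC₁.trans hC₂).eq_or_lt with rfl | hC₁₂
  · have hzero : ∀ i, ∀ᶠ y in 𝓝 x, gradient (f i) y = 0 := fun i =>
      eventually_gradient_eq_zero_of_eventually_eq (c := C₁) <| hnear.mono fun y hy =>
        le_antisymm (hy i).1.2 (hy i).1.1
    filter_upwards [eventually_all.2 hzero] with y hy
    simp [hy, div_self (sub_pos.2 hμ).ne']
  rcases ((norm_nonneg _).trans hC₃).eq_or_lt with rfl | hC₃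
  · filter_upwards [hnear] with y hy
    simp [fun i => norm_le_zero_iff.1 (hy i).2]
  exact eventually_neg_mul_norm_le_sum_inner_gradient_of_lt hf hcont hmax hμ hC₁₂ hC₃
    (fun i => (hx i).1) (fun i => (hx i).2)

theorem hypervolume_max_approx_first_order_optimality_of_mean_general
    (n N : ℕ)
    (Θ : Set (EuclideanSpace ℝ (Fin n))) (hΘ : IsOpen Θ)
    (l : Fin N → EuclideanSpace ℝ (Fin n) → ℝ)
    (hl : ∀ i, ContDiffOn ℝ 1 (l i) Θ)
    (μ : ℝ)
    (θs : EuclideanSpace ℝ (Fin n)) (hθs : θs ∈ Θ)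
    (hmax : IsLocalMax (fun θ => ∑ i : Fin N, Real.log (μ - l i θ)) θs)
    (ε₀ : ℝ) (hε₀ : 0 < ε₀)
    (hball : ∀ Δ : EuclideanSpace ℝ (Fin n), ‖Δ‖ ≤ ε₀ → θs + Δ ∈ Θ)
    (C₁ C₂ C₃ : ℝ) (hμ : C₂ < μ)
    (hbound : ∀ i, ∀ Δ : EuclideanSpace ℝ (Fin n), ‖Δ‖ ≤ ε₀ →
      C₁ ≤ l i (θs + Δ) ∧ l i (θs + Δ) ≤ C₂)
    (hgrad : ∀ i, ∀ Δ : EuclideanSpace ℝ (Fin n), ‖Δ‖ ≤ ε₀ →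
      ‖gradient (l i) (θs + Δ)‖ ≤ C₃) :
    ∃ ε ∈ Set.Ioc (0 : ℝ) ε₀, ∀ ξ ∈ Set.Ioc (0 : ℝ) ε,
      ∀ Δ : EuclideanSpace ℝ (Fin n), ‖Δ‖ ≤ ξ →
        θs + Δ ∈ Θ ∧
        ∑ i : Fin N, ⟪gradient (l i) (θs + Δ), Δ⟫ ≥
          -(max ((μ - C₁) / (μ - C₂) - 1) (1 - (μ - C₂) / (μ - C₁)))
            * C₃ * ξ * N := by
  rcases N.eq_zero_or_pos with rfl | hN
  · exact ⟨ε₀, ⟨hε₀, le_rfl⟩, fun ξ hξ Δ hΔ => ⟨hball Δ (hΔ.trans hξ.2), by simp⟩⟩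
  have : NeZero N := ⟨hN.ne'⟩
  have hnear : ∀ᶠ y in 𝓝 θs, ∀ i, (C₁ ≤ l i y ∧ l i y ≤ C₂) ∧ ‖gradient (l i) y‖ ≤ C₃ := by
    filter_upwards [Metric.closedBall_mem_nhds θs hε₀] with y hy i
    rw [Metric.mem_closedBall, dist_eq_norm] at hy
    simpa using And.intro (hbound i _ hy) (hgrad i _ hy)
  obtain ⟨⟨hC₁, hC₂⟩, hC₃⟩ := hnear.self_of_nhds 0
  have hν : max ((μ - C₁) / (μ - C₂) - 1) (1 - (μ - C₂) / (μ - C₁)) = (μ - C₁) / (μ - C₂) - 1 :=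
    max_eq_left <| sub_nonneg.1 <| by
      rw [div_sub_one_sub_one_sub_div (by linarith) (by linarith)]
      exact div_nonneg (sq_nonneg _) (mul_nonneg (by linarith) (by linarith))
  have hν₀ : 0 ≤ (μ - C₁) / (μ - C₂) - 1 :=
    sub_nonneg.2 ((one_le_div (by linarith)).2 (by linarith))
  have hlocal := eventually_neg_mul_norm_le_sum_inner_gradient
    (fun i => ((hl i).differentiableOn one_ne_zero).differentiableAt (hΘ.mem_nhds hθs))
    (fun i => (hl i).continuousAt_gradient hΘ hθs) hmax hμ hnear
  obtain ⟨ε, hε, hε_bound⟩ := exists_forall_norm_le_of_eventually_nhds hε₀ hlocal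
  refine ⟨ε, hε, fun ξ hξ Δ hΔ => ⟨hball Δ (hΔ.trans (hξ.2.trans hε.2)), ?_⟩⟩
  have hΔbound := hε_bound Δ (hΔ.trans hξ.2)
  simp only [add_sub_cancel_left, Fintype.card_fin] at hΔbound
  rw [hν]
  have hK : 0 ≤ ((μ - C₁) / (μ - C₂) - 1) * C₃ * N :=
    mul_nonneg (mul_nonneg hν₀ ((norm_nonneg _).trans hC₃)) N.cast_nonneg
  linarith [mul_le_mul_of_nonneg_left hΔ hK]

theorem hypervolume_max_approx_first_order_optimality_of_mean
    (n N : ℕ)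
    (Θ : Set (EuclideanSpace ℝ (Fin n))) (hΘ : IsOpen Θ)
    (l : Fin N → EuclideanSpace ℝ (Fin n) → ℝ)
    (hl : ∀ i, ContDiffOn ℝ 1 (l i) Θ)
    (μ : ℝ)
    (θs : EuclideanSpace ℝ (Fin n)) (hθs : θs ∈ Θ)
    (hfeas : ∀ i, l i θs < μ)
    (hmax : IsLocalMax (fun θ => ∑ i : Fin N, Real.log (μ - l i θ)) θs)
    (ε₀ : ℝ) (hε₀ : 0 < ε₀)
    (hball : ∀ Δ : EuclideanSpace ℝ (Fin n), ‖Δ‖ ≤ ε₀ → θs + Δ ∈ Θ)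
    (C₁ C₂ C₃ : ℝ) (hμ : C₂ < μ)
    (hbound : ∀ i, ∀ Δ : EuclideanSpace ℝ (Fin n), ‖Δ‖ ≤ ε₀ →
      C₁ ≤ l i (θs + Δ) ∧ l i (θs + Δ) ≤ C₂)
    (hgrad : ∀ i, ∀ Δ : EuclideanSpace ℝ (Fin n), ‖Δ‖ ≤ ε₀ →
      ‖gradient (l i) (θs + Δ)‖ ≤ C₃) :
    ∃ ε ∈ Set.Ioc (0 : ℝ) ε₀, ∀ ξ ∈ Set.Ioc (0 : ℝ) ε,
      ∀ Δ : EuclideanSpace ℝ (Fin n), ‖Δ‖ ≤ ξ →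
        θs + Δ ∈ Θ ∧
        ∑ i : Fin N, ⟪gradient (l i) (θs + Δ), Δ⟫ ≥
          -(max ((μ - C₁) / (μ - C₂) - 1) (1 - (μ - C₂) / (μ - C₁)))
            * C₃ * ξ * N :=
  hypervolume_max_approx_first_order_optimality_of_mean_general n N Θ hΘ l hl μ θs hθs hmax ε₀ hε₀
    hball C₁ C₂ C₃ hμ hbound hgrad
end
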